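/- Let f : ℝ^d → ℝ^d be twice continuously differentiable and let y : ℝ → ℝ^d be differentiable with y'(t) = f(y(t)) for all t. Then for every t₀ ∈ ℝ the one-step (local truncation) error of SSPRK2 is of third order: there exist constants K > 0 and δ > 0 such that ‖Φ₂(h, f, y(t₀)) − y(t₀ + h)‖ ≤ K·h³ for all h ∈ (0, δ]. -/

import Mathlib

/-!
Write `y₀ = y t₀`, `φ h = f (y₀ + h • f y₀)` and `ψ h = f (y (t₀ + h))`, so that `ψ` is the
derivative of the exact solution and both `φ` and `ψ` are `C²`. The error
`e h = Φ₂(h, f, y₀) - y (t₀ + h)` vanishes at `0` and, because `φ` and `ψ` agree to first order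
at `0` (both have value `f y₀` and derivative `Df(y₀) (f y₀)`),
`e' h = ½ (φ h - φ 0 - h φ' 0) + (h / 2) (φ' h - φ' 0) - (ψ h - ψ 0 - h ψ' 0) = O(h²)`.
Integrating gives `e h = O(h³)`.
-/

/-- One step of the SSPRK2 method with step size `h` for the ODE `y' = f(y)`:
`Φ₂(h,f,y) = (1/2)y + (1/2)y₁ + (1/2)h·f(y₁)` where `y₁ = y + h·f(y)`. -/
noncomputable def ssprk2Step {E : Type*} [AddCommGroup E] [Module ℝ E]
    (h : ℝ) (f : E → E) (y : E) : E :=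
  (1 / 2 : ℝ) • y + (1 / 2 : ℝ) • (y + h • f y) + ((1 / 2 : ℝ) * h) • f (y + h • f y)

open Set

section

variable {E : Type*} [NormedAddCommGroup E] [NormedSpace ℝ E]

theorem norm_le_of_norm_deriv_le_mul_pow {g g' : ℝ → E} {C r : ℝ} {n : ℕ}
    (hg : ∀ x, HasDerivAt g (g' x) x) (hg0 : g 0 = 0)
    (bound : ∀ x ∈ Ico 0 r, ‖g' x‖ ≤ C * x ^ n) :
    ∀ x ∈ Icc 0 r, ‖g x‖ ≤ C / (n + 1) * x ^ (n + 1) := by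
  have hB : ∀ x : ℝ, HasDerivAt (fun x => C / (n + 1) * x ^ (n + 1)) (C * x ^ n) x := fun x => by
    refine ((hasDerivAt_pow (n + 1) x).const_mul (C / (n + 1))).congr_deriv ?_
    simp only [Nat.add_sub_cancel, Nat.cast_add, Nat.cast_one]
    field_simp
  refine image_norm_le_of_norm_deriv_right_le_deriv_boundary
    (fun x _ => (hg x).continuousAt.continuousWithinAt) (fun x _ => (hg x).hasDerivWithinAt)
    (by simp [hg0]) hB bound

theorem ContDiff.exists_norm_sub_le_mul {F : ℝ → E} (hF : ContDiff ℝ 1 F) (r : ℝ) :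
    ∃ C, ∀ x ∈ Icc 0 r, ‖F x - F 0‖ ≤ C * x := by
  obtain ⟨K, hK⟩ :=
    hF.locallyLipschitz.locallyLipschitzOn.exists_lipschitzOnWith_of_compact
      (isCompact_Icc (a := 0) (b := r))
  refine ⟨K, fun x hx => ?_⟩
  simpa [abs_of_nonneg hx.1] using hK.norm_sub_le hx (left_mem_Icc.2 (hx.1.trans hx.2))

theorem ContDiff.exists_norm_taylor_remainder_le {F : ℝ → E} (hF : ContDiff ℝ 2 F) (r : ℝ) :
    ∃ C, ∀ x ∈ Icc 0 r, ‖F x - F 0 - x • deriv F 0‖ ≤ C * x ^ 2 := by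
  obtain ⟨C, hC⟩ := (hF.deriv' (n := 1)).exists_norm_sub_le_mul r
  refine ⟨C / 2, fun x hx => ?_⟩
  have hR : ∀ x, HasDerivAt (fun x => F x - F 0 - x • deriv F 0) (deriv F x - deriv F 0) x :=
    fun x => ((((hF.differentiable two_ne_zero) x).hasDerivAt.sub_const (F 0)).sub
        ((hasDerivAt_id' x).smul_const (deriv F 0))).congr_deriv (by rw [one_smul])
  simpa [one_add_one_eq_two] using norm_le_of_norm_deriv_le_mul_pow (n := 1) hR (by simp)
    (fun x hx => by simpa using hC x (Ico_subset_Icc_self hx)) x hx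

theorem contDiff_succ_of_hasDerivAt_comp {f : E → E} {y : ℝ → E} {n : ℕ} (hf : ContDiff ℝ n f)
    (hy : ∀ t, HasDerivAt y (f (y t)) t) : ContDiff ℝ (n + 1) y := by
  have hyd : Differentiable ℝ y := fun t => (hy t).differentiableAt
  have hderiv : deriv y = f ∘ y := funext fun t => (hy t).deriv
  induction n with
  | zero => exact contDiff_one_iff_deriv.2 ⟨hyd, hderiv ▸ hf.continuous.comp hyd.continuous⟩
  | succ k ih =>
    refine contDiff_succ_iff_deriv.2 ⟨hyd, by simp, ?_⟩
    rw [hderiv]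
    exact_mod_cast hf.comp (ih (hf.of_le (by exact_mod_cast k.le_succ)))

theorem hasDerivAt_ssprk2Step {f : E → E} (hf : Differentiable ℝ f) (y₀ : E) (h : ℝ) :
    HasDerivAt (fun h => ssprk2Step h f y₀)
      ((1 / 2 : ℝ) • f y₀ + (1 / 2 : ℝ) • f (y₀ + h • f y₀)
        + ((1 / 2 : ℝ) * h) • deriv (fun h => f (y₀ + h • f y₀)) h) h := by
  have hstage := ((hasDerivAt_id' h).smul_const (f y₀)).const_add y₀
  have hφ : HasDerivAt (fun h => f (y₀ + h • f y₀)) (deriv (fun h => f (y₀ + h • f y₀)) h) h :=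
    ((hf _).comp h hstage.differentiableAt).hasDerivAt
  refine (((hasDerivAt_const h ((1 / 2 : ℝ) • y₀)).add (hstage.const_smul (1 / 2 : ℝ))).add
    (((hasDerivAt_id' h).const_mul (1 / 2 : ℝ)).smul hφ)).congr_deriv ?_
  module

theorem deriv_comp_tangentLine_eq_deriv_comp_solution {f : E → E} (hf : Differentiable ℝ f)
    {y : ℝ → E} (hy : ∀ t, HasDerivAt y (f (y t)) t) (t₀ : ℝ) :
    deriv (fun h => f (y t₀ + h • f (y t₀))) (0 : ℝ) = deriv (fun h => f (y (t₀ + h))) 0 := by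
  have hf' := (hf (y t₀)).hasFDerivAt
  have hline : HasDerivAt (fun h => f (y t₀ + h • f (y t₀)))
      (fderiv ℝ f (y t₀) (f (y t₀))) (0 : ℝ) :=
    hf'.comp_hasDerivAt_of_eq 0 ((((hasDerivAt_id' (0 : ℝ)).smul_const (f (y t₀))).const_add
      (y t₀)).congr_deriv (one_smul _ _)) (by simp)
  have hsol : HasDerivAt (fun h => f (y (t₀ + h)))
      (fderiv ℝ f (y t₀) (f (y (t₀ + 0)))) (0 : ℝ) :=
    hf'.comp_hasDerivAt_of_eq 0 ((hy (t₀ + 0)).comp_const_add t₀ 0) (by simp)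
  rw [hline.deriv, hsol.deriv, add_zero]

theorem exists_norm_ssprk2Step_sub_le {f : E → E} (hf : ContDiff ℝ 2 f) {y : ℝ → E}
    (hy : ∀ t, HasDerivAt y (f (y t)) t) (t₀ : ℝ) :
    ∃ C, ∀ h ∈ Icc (0 : ℝ) 1, ‖ssprk2Step h f (y t₀) - y (t₀ + h)‖ ≤ C * h ^ 3 := by
  set y₀ := y t₀
  set φ : ℝ → E := fun h => f (y₀ + h • f y₀)
  set ψ : ℝ → E := fun h => f (y (t₀ + h))
  have hφ : ContDiff ℝ 2 φ := hf.comp (by fun_prop)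
  have hψ : ContDiff ℝ 2 ψ :=
    hf.comp ((contDiff_succ_of_hasDerivAt_comp (n := 1) (hf.of_le one_le_two) hy).comp
      (by fun_prop))
  have hφ0 : φ 0 = f y₀ := by simp [φ]
  have hψ0 : ψ 0 = f y₀ := by simp [ψ, y₀]
  have hφψ : deriv φ 0 = deriv ψ 0 :=
    deriv_comp_tangentLine_eq_deriv_comp_solution (hf.differentiable two_ne_zero) hy t₀
  set e' : ℝ → E := fun h => (1 / 2 : ℝ) • (φ h - φ 0 - h • deriv φ 0)
    + ((1 / 2 : ℝ) * h) • (deriv φ h - deriv φ 0) - (ψ h - ψ 0 - h • deriv ψ 0)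
  have he' : ∀ h, HasDerivAt (fun h => ssprk2Step h f y₀ - y (t₀ + h)) (e' h) h := fun h => by
    refine ((hasDerivAt_ssprk2Step (hf.differentiable two_ne_zero) y₀ h).sub
      ((hy (t₀ + h)).comp_const_add t₀ h)).congr_deriv ?_
    simp only [e']
    rw [hφ0, hψ0, ← hφψ]
    module
  obtain ⟨Cφ, hCφ⟩ := hφ.exists_norm_taylor_remainder_le 1
  obtain ⟨Cφ', hCφ'⟩ := (hφ.deriv' (n := 1)).exists_norm_sub_le_mul 1
  obtain ⟨Cψ, hCψ⟩ := hψ.exists_norm_taylor_remainder_le 1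
  have he'_le : ∀ h ∈ Ico (0 : ℝ) 1, ‖e' h‖ ≤ (Cφ / 2 + Cφ' / 2 + Cψ) * h ^ 2 := by
    intro h hh
    have hh' : h ∈ Icc (0 : ℝ) 1 := Ico_subset_Icc_self hh
    calc ‖e' h‖ ≤ 1 / 2 * (Cφ * h ^ 2) + 1 / 2 * h * (Cφ' * h) + Cψ * h ^ 2 := by
          refine (norm_sub_le _ _).trans
            (add_le_add ((norm_add_le _ _).trans (add_le_add ?_ ?_)) (hCψ h hh'))
          · rw [norm_smul, Real.norm_of_nonneg (by norm_num)]
            exact mul_le_mul_of_nonneg_left (hCφ h hh') (by norm_num)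
          · rw [norm_smul, Real.norm_of_nonneg (by linarith [hh.1])]
            exact mul_le_mul_of_nonneg_left (hCφ' h hh') (by linarith [hh.1])
      _ = (Cφ / 2 + Cφ' / 2 + Cψ) * h ^ 2 := by ring
  have h0 : ssprk2Step 0 f y₀ - y (t₀ + 0) = 0 := by simp [ssprk2Step, y₀]; module
  exact ⟨_, by simpa using norm_le_of_norm_deriv_le_mul_pow he' h0 he'_le⟩

end

/-- If `f : ℝ^d → ℝ^d` is twice continuously differentiable and `y` solves `y' = f(y)`,
then at every time `t₀` the one-step (local truncation) error of SSPRK2 is of third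
order: `‖Φ₂(h, f, y(t₀)) − y(t₀ + h)‖ ≤ K·h³` for all sufficiently small `h > 0`. -/
theorem ssprk2_local_truncation_error_third_order
    {d : ℕ} (f : EuclideanSpace ℝ (Fin d) → EuclideanSpace ℝ (Fin d))
    (hf : ContDiff ℝ 2 f)
    (y : ℝ → EuclideanSpace ℝ (Fin d))
    (hy : ∀ t : ℝ, HasDerivAt y (f (y t)) t) :
    ∀ t₀ : ℝ, ∃ K > (0 : ℝ), ∃ δ > (0 : ℝ), ∀ h ∈ Set.Ioc (0 : ℝ) δ,
      ‖ssprk2Step h f (y t₀) - y (t₀ + h)‖ ≤ K * h ^ 3 := by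
  intro t₀
  obtain ⟨C, hC⟩ := exists_norm_ssprk2Step_sub_le hf hy t₀
  refine ⟨max C 1, by positivity, 1, one_pos, fun h hh => ?_⟩
  calc _ ≤ C * h ^ 3 := hC h (Ioc_subset_Icc_self hh)
    _ ≤ max C 1 * h ^ 3 := mul_le_mul_of_nonneg_right (le_max_left C 1) (pow_nonneg hh.1.le 3)
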